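/- arXiv:1906.08241 — 2 statements merged into one kernel-verified Lean document; each statement's English description precedes it below -/
import Mathlib

section
/- Let u be a random vector in ℝ^d whose components u₁, …, u_d are i.i.d. with E[u₁] = E[u₁³] = 0 and finite fourth moments. Let T_w(u) = Cu + m for m ∈ ℝ^d and C ∈ ℝ^{d×d}. Then for any fixed vector z̄ ∈ ℝ^d, E[‖T_w(u) − z̄‖₂² (1 + ‖u‖₂²)] = (1 + d·E[u₁²]) ‖m − z̄‖₂² + (E[u₁²] + (d−1)(E[u₁²])² + E[u₁⁴]) ‖C‖_F². -/
/-!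
Write `W = 1 + ‖u‖²`. Row by row, `‖Cu + m - z̄‖² W` is a quadratic polynomial in `u` times `W`,
so its expectation is a combination of the moments `E[W]`, `E[u_j W]` and `E[u_j u_l W]`.
Expanding `W`, these reduce to `E[u_j u_l u_k²]` and lower moments; independence together with
`E[u_i] = E[u_i³] = 0` kills every term with an unpaired index, leaving
`E[u_j u_l W] = δ_jl (E[u₁²] + (d - 1) E[u₁²]² + E[u₁⁴])` and `E[u_j W] = 0`.
-/

noncomputable section

open MeasureTheory ProbabilityTheory
open scoped RealInnerProductSpace

/-- The affine reparameterization map `T_w(u) = C u + m`, where the parameter vector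
`w ∈ ℝ^{d+d²}` collects the entries of `m` (at indices `Sum.inl i`) and of `C`
(at indices `Sum.inr (i, j)`). -/
def Tmap {d : ℕ} (w : EuclideanSpace ℝ (Fin d ⊕ Fin d × Fin d))
    (u : EuclideanSpace ℝ (Fin d)) : EuclideanSpace ℝ (Fin d) :=
  (WithLp.equiv 2 _).symm fun i => (∑ j, w (Sum.inr (i, j)) * u j) + w (Sum.inl i)

/-- The parameter vector `w = (m, C) ∈ ℝ^{d+d²}`. -/
def param {d : ℕ} (m : EuclideanSpace ℝ (Fin d)) (C : Matrix (Fin d) (Fin d) ℝ) :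
    EuclideanSpace ℝ (Fin d ⊕ Fin d × Fin d) :=
  (WithLp.equiv 2 _).symm (Sum.elim (fun i => m i) fun p => C p.1 p.2)

open Finset
open scoped ENNReal

instance : ENNReal.HolderTriple 4 4 2 :=
  ⟨by rw [show (4 : ℝ≥0∞) = 2 * 2 by norm_num, ENNReal.mul_inv (by simp) (by simp), ← mul_add,
    ENNReal.inv_two_add_inv_two, mul_one]⟩

lemma Tmap_param_apply {d : ℕ} (m : EuclideanSpace ℝ (Fin d)) (C : Matrix (Fin d) (Fin d) ℝ)
    (x : EuclideanSpace ℝ (Fin d)) (i : Fin d) :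
    Tmap (param m C) x i = ∑ j, C i j * x j + m i := by
  simp [Tmap, param]

lemma sum_mul_add_sq_mul {ι R : Type*} [Fintype ι] [CommRing R] (c x : ι → R) (a w : R) :
    (∑ j, c j * x j + a) ^ 2 * w =
      ∑ j, ∑ l, c j * c l * (x j * x l * w) + ∑ j, 2 * a * c j * (x j * w) + a ^ 2 * w := by
  have hquad : ∑ j, ∑ l, c j * c l * (x j * x l * w) = (∑ j, c j * x j) ^ 2 * w := by
    rw [sq, sum_mul_sum, sum_mul]
    refine sum_congr rfl fun j _ => ?_
    rw [sum_mul]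
    exact sum_congr rfl fun l _ => by ring
  have hlin : ∑ j, 2 * a * c j * (x j * w) = 2 * a * (∑ j, c j * x j) * w := by
    rw [mul_sum, sum_mul]
    exact sum_congr rfl fun j _ => by ring
  rw [hquad, hlin]
  ring

section FourthMoments

variable {Ω ι : Type*} [MeasurableSpace Ω] {μ : Measure Ω} {X : ι → Ω → ℝ}

lemma integral_pow_mul_eq_zero_of_ne (hindep : iIndepFun X μ) (hmean : ∀ i, ∫ ω, X i ω ∂μ = 0)
    (hL4 : ∀ i, MemLp (X i) 4 μ) {a b : ι} (hab : a ≠ b) (n : ℕ) :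
    ∫ ω, X a ω ^ n * X b ω ∂μ = 0 := by
  have hI := (hindep.indepFun hab).comp (measurable_id.pow_const n) measurable_id
  have := hI.integral_mul_eq_mul_integral ((hL4 a).1.pow n) (hL4 b).1
  simp only [Function.comp_def, id, Pi.mul_def] at this
  rw [this, hmean b, mul_zero]

lemma integral_mul_sq_eq_zero (hindep : iIndepFun X μ) (hmean : ∀ i, ∫ ω, X i ω ∂μ = 0)
    (hthird : ∀ i, ∫ ω, X i ω ^ 3 ∂μ = 0) (hL4 : ∀ i, MemLp (X i) 4 μ) (j k : ι) :
    ∫ ω, X j ω * X k ω ^ 2 ∂μ = 0 := by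
  by_cases hkj : k = j
  · subst hkj
    simpa only [← pow_succ'] using hthird k
  · simpa only [mul_comm] using integral_pow_mul_eq_zero_of_ne hindep hmean hL4 hkj 2

lemma integral_mul_mul_sq [DecidableEq ι] (hindep : iIndepFun X μ)
    (hmean : ∀ i, ∫ ω, X i ω ∂μ = 0) (hL4 : ∀ i, MemLp (X i) 4 μ) (j l k : ι) :
    ∫ ω, X j ω * X l ω * X k ω ^ 2 ∂μ =
      if j = l then
        if k = j then ∫ ω, X j ω ^ 4 ∂μ else (∫ ω, X j ω ^ 2 ∂μ) * ∫ ω, X k ω ^ 2 ∂μ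
      else 0 := by
  by_cases hjl : j = l
  · subst hjl
    by_cases hkj : k = j
    · subst hkj
      simp only [if_true]
      congr 1; ext ω; ring
    · have hI := (hindep.indepFun (Ne.symm hkj)).comp (measurable_id.pow_const 2)
        (measurable_id.pow_const 2)
      have := hI.integral_mul_eq_mul_integral ((hL4 j).1.pow 2) ((hL4 k).1.pow 2)
      simp only [Function.comp_def, id, Pi.mul_def] at this
      simp only [if_true, if_neg hkj, ← this, ← sq]
  · rw [if_neg hjl]
    by_cases hkj : k = j
    · subst hkj
      convert integral_pow_mul_eq_zero_of_ne hindep hmean hL4 hjl 3 using 3; ring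
    by_cases hkl : k = l
    · subst hkl
      convert integral_pow_mul_eq_zero_of_ne hindep hmean hL4 (Ne.symm hjl) 3 using 3; ring
    have hk : k ∉ ({j, l} : Finset ι) := by simp [hkj, hkl]
    have hI := (hindep.indepFun_finsetProd_of_notMem₀ (fun i => (hL4 i).1.aemeasurable) hk).comp
      measurable_id (measurable_id.pow_const 2)
    rw [prod_pair hjl] at hI
    have := hI.integral_mul_eq_mul_integral ((hL4 j).1.mul (hL4 l).1) ((hL4 k).1.pow 2)
    simp only [Function.comp_def, id, Pi.mul_def] at this
    rw [this]
    convert zero_mul _ using 2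
    simpa using integral_pow_mul_eq_zero_of_ne hindep hmean hL4 hjl 1

lemma memLp_two_mul (hL4 : ∀ i, MemLp (X i) 4 μ) (j l : ι) :
    MemLp (fun ω => X j ω * X l ω) 2 μ :=
  (hL4 l).mul' (hL4 j)

lemma memLp_two_sq (hL4 : ∀ i, MemLp (X i) 4 μ) (k : ι) : MemLp (fun ω => X k ω ^ 2) 2 μ := by
  simpa only [sq] using memLp_two_mul hL4 k k

variable [Fintype ι]

lemma memLp_one_add_sum_sq [IsFiniteMeasure μ] (hL4 : ∀ i, MemLp (X i) 4 μ) :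
    MemLp (fun ω => 1 + ∑ k, X k ω ^ 2) 2 μ :=
  (memLp_const (1 : ℝ)).add (memLp_finsetSum _ fun k _ => memLp_two_sq hL4 k)

lemma integrable_mul_one_add_sum_sq [IsFiniteMeasure μ] (hL4 : ∀ i, MemLp (X i) 4 μ) (j : ι) :
    Integrable (fun ω => X j ω * (1 + ∑ k, X k ω ^ 2)) μ :=
  ((hL4 j).mono_exponent (p := 2) (by norm_num)).integrable_mul (memLp_one_add_sum_sq hL4)

lemma integrable_mul_mul_one_add_sum_sq [IsFiniteMeasure μ] (hL4 : ∀ i, MemLp (X i) 4 μ)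
    (j l : ι) : Integrable (fun ω => X j ω * X l ω * (1 + ∑ k, X k ω ^ 2)) μ :=
  (memLp_two_mul hL4 j l).integrable_mul (memLp_one_add_sum_sq hL4)

lemma integrable_sq_add_mul_one_add_sum_sq [IsFiniteMeasure μ] (hL4 : ∀ i, MemLp (X i) 4 μ)
    (c : ι → ℝ) (a : ℝ) :
    Integrable (fun ω => (∑ j, c j * X j ω + a) ^ 2 * (1 + ∑ k, X k ω ^ 2)) μ := by
  have hlin : MemLp (fun ω => ∑ j, c j * X j ω + a) 4 μ :=
    (memLp_finsetSum _ fun j _ => (hL4 j).const_mul (c j)).add (memLp_const a)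
  have hsq : MemLp (fun ω => (∑ j, c j * X j ω + a) ^ 2) 2 μ := by
    simpa only [sq] using hlin.mul' hlin
  exact hsq.integrable_mul (memLp_one_add_sum_sq hL4)

lemma integral_one_add_sum_sq [IsProbabilityMeasure μ] (hL4 : ∀ i, MemLp (X i) 4 μ) {σ : ℝ}
    (h2 : ∀ i, ∫ ω, X i ω ^ 2 ∂μ = σ) :
    ∫ ω, (1 + ∑ k, X k ω ^ 2) ∂μ = 1 + Fintype.card ι * σ := by
  have hsq k := (memLp_two_sq hL4 k).integrable one_le_two
  rw [integral_add (integrable_const 1) (integrable_finsetSum _ fun k _ => hsq k),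
    integral_finsetSum _ fun k _ => hsq k]
  simp [h2]

lemma integral_mul_one_add_sum_sq [IsFiniteMeasure μ] (hindep : iIndepFun X μ)
    (hmean : ∀ i, ∫ ω, X i ω ∂μ = 0) (hthird : ∀ i, ∫ ω, X i ω ^ 3 ∂μ = 0)
    (hL4 : ∀ i, MemLp (X i) 4 μ) (j : ι) :
    ∫ ω, X j ω * (1 + ∑ k, X k ω ^ 2) ∂μ = 0 := by
  have hX : MemLp (X j) 2 μ := (hL4 j).mono_exponent (by norm_num)
  have hXsq k : Integrable (fun ω => X j ω * X k ω ^ 2) μ := hX.integrable_mul (memLp_two_sq hL4 k)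
  simp only [mul_add, mul_one, mul_sum]
  rw [integral_add (hX.integrable one_le_two) (integrable_finsetSum _ fun k _ => hXsq k),
    integral_finsetSum _ fun k _ => hXsq k]
  simp [hmean, integral_mul_sq_eq_zero hindep hmean hthird hL4]

lemma integral_mul_mul_one_add_sum_sq [DecidableEq ι] [IsFiniteMeasure μ]
    (hindep : iIndepFun X μ) (hmean : ∀ i, ∫ ω, X i ω ∂μ = 0) (hL4 : ∀ i, MemLp (X i) 4 μ)
    {σ κ : ℝ} (h2 : ∀ i, ∫ ω, X i ω ^ 2 ∂μ = σ) (h4 : ∀ i, ∫ ω, X i ω ^ 4 ∂μ = κ) (j l : ι) :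
    ∫ ω, X j ω * X l ω * (1 + ∑ k, X k ω ^ 2) ∂μ =
      if j = l then σ + ((Fintype.card ι : ℝ) - 1) * σ ^ 2 + κ else 0 := by
  have hXXsq k : Integrable (fun ω => X j ω * X l ω * X k ω ^ 2) μ :=
    (memLp_two_mul hL4 j l).integrable_mul (memLp_two_sq hL4 k)
  simp only [mul_add, mul_one, mul_sum]
  rw [integral_add ((memLp_two_mul hL4 j l).integrable one_le_two)
      (integrable_finsetSum _ fun k _ => hXXsq k),
    integral_finsetSum _ fun k _ => hXXsq k]
  simp only [integral_mul_mul_sq hindep hmean hL4, h2, h4]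
  split_ifs with hjl
  · subst hjl
    have hsplit k : (if k = j then κ else σ ^ 2) = σ ^ 2 + if k = j then κ - σ ^ 2 else 0 := by
      split_ifs <;> ring
    simp only [← sq, hsplit, sum_add_distrib, sum_const, sum_ite_eq', mem_univ, if_true, card_univ,
      nsmul_eq_mul, h2]
    ring
  · simpa using integral_pow_mul_eq_zero_of_ne hindep hmean hL4 hjl 1

lemma integral_sq_add_mul_one_add_sum_sq [DecidableEq ι] [IsProbabilityMeasure μ]
    (hindep : iIndepFun X μ) (hmean : ∀ i, ∫ ω, X i ω ∂μ = 0)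
    (hthird : ∀ i, ∫ ω, X i ω ^ 3 ∂μ = 0) (hL4 : ∀ i, MemLp (X i) 4 μ)
    {σ κ : ℝ} (h2 : ∀ i, ∫ ω, X i ω ^ 2 ∂μ = σ) (h4 : ∀ i, ∫ ω, X i ω ^ 4 ∂μ = κ)
    (c : ι → ℝ) (a : ℝ) :
    ∫ ω, (∑ j, c j * X j ω + a) ^ 2 * (1 + ∑ k, X k ω ^ 2) ∂μ =
      (1 + Fintype.card ι * σ) * a ^ 2
        + (σ + ((Fintype.card ι : ℝ) - 1) * σ ^ 2 + κ) * ∑ j, c j ^ 2 := by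
  have hquadInt : Integrable
      (fun ω => ∑ j, ∑ l, c j * c l * (X j ω * X l ω * (1 + ∑ k, X k ω ^ 2))) μ :=
    integrable_finsetSum _ fun j _ => integrable_finsetSum _ fun l _ =>
      (integrable_mul_mul_one_add_sum_sq hL4 j l).const_mul _
  have hlinInt : Integrable (fun ω => ∑ j, 2 * a * c j * (X j ω * (1 + ∑ k, X k ω ^ 2))) μ :=
    integrable_finsetSum _ fun j _ => (integrable_mul_one_add_sum_sq hL4 j).const_mul _
  have hquad : ∫ ω, ∑ j, ∑ l, c j * c l * (X j ω * X l ω * (1 + ∑ k, X k ω ^ 2)) ∂μ =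
      (σ + ((Fintype.card ι : ℝ) - 1) * σ ^ 2 + κ) * ∑ j, c j ^ 2 := by
    rw [integral_finsetSum _ fun j _ => integrable_finsetSum _ fun l _ =>
      (integrable_mul_mul_one_add_sum_sq hL4 j l).const_mul _, mul_sum]
    refine sum_congr rfl fun j _ => ?_
    rw [integral_finsetSum _ fun l _ => (integrable_mul_mul_one_add_sum_sq hL4 j l).const_mul _]
    simp only [integral_const_mul, integral_mul_mul_one_add_sum_sq hindep hmean hL4 h2 h4,
      mul_ite, mul_zero, sum_ite_eq, mem_univ, if_true]
    ring
  have hlin : ∫ ω, ∑ j, 2 * a * c j * (X j ω * (1 + ∑ k, X k ω ^ 2)) ∂μ = 0 := by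
    rw [integral_finsetSum _ fun j _ => (integrable_mul_one_add_sum_sq hL4 j).const_mul _]
    simp [integral_const_mul, integral_mul_one_add_sum_sq hindep hmean hthird hL4]
  simp only [sum_mul_add_sq_mul]
  rw [integral_add (hquadInt.fun_add hlinInt)
      (((memLp_one_add_sum_sq hL4).integrable one_le_two).const_mul _),
    integral_add hquadInt hlinInt, hquad, hlin, integral_const_mul,
    integral_one_add_sum_sq hL4 h2]
  ring

end FourthMoments

theorem stmt_6_general {Ω : Type*} [MeasurableSpace Ω] (μ : Measure Ω) [IsProbabilityMeasure μ]
    (d : ℕ) (hd : 0 < d) (u : Ω → EuclideanSpace ℝ (Fin d))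
    (hindep : iIndepFun (fun i ω => u ω i) μ)
    (hident : ∀ i j : Fin d, IdentDistrib (fun ω => u ω i) (fun ω => u ω j) μ μ)
    (hmean : ∀ i, ∫ ω, u ω i ∂μ = 0)
    (hthird : ∀ i, ∫ ω, u ω i ^ 3 ∂μ = 0)
    (hL4 : ∀ i, MemLp (fun ω => u ω i) 4 μ)
    (m zbar : EuclideanSpace ℝ (Fin d)) (C : Matrix (Fin d) (Fin d) ℝ) :
    ∫ ω, ‖Tmap (param m C) (u ω) - zbar‖ ^ 2 * (1 + ‖u ω‖ ^ 2) ∂μ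
      = (1 + (d : ℝ) * ∫ ω, u ω ⟨0, hd⟩ ^ 2 ∂μ) * ‖m - zbar‖ ^ 2
        + ((∫ ω, u ω ⟨0, hd⟩ ^ 2 ∂μ) + ((d : ℝ) - 1) * (∫ ω, u ω ⟨0, hd⟩ ^ 2 ∂μ) ^ 2
            + ∫ ω, u ω ⟨0, hd⟩ ^ 4 ∂μ) * ∑ i, ∑ j, C i j ^ 2 := by
  have hmoment (n : ℕ) i : ∫ ω, u ω i ^ n ∂μ = ∫ ω, u ω ⟨0, hd⟩ ^ n ∂μ :=
    ((hident i ⟨0, hd⟩).comp (measurable_id.pow_const n)).integral_eq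
  have hpointwise ω : ‖Tmap (param m C) (u ω) - zbar‖ ^ 2 * (1 + ‖u ω‖ ^ 2) =
      ∑ i, (∑ j, C i j * u ω j + (m i - zbar i)) ^ 2 * (1 + ∑ k, u ω k ^ 2) := by
    simp only [EuclideanSpace.real_norm_sq_eq, PiLp.sub_apply, Tmap_param_apply, sum_mul,
      add_sub_assoc]
  have hrow i := integral_sq_add_mul_one_add_sum_sq (X := fun i ω => u ω i) hindep hmean hthird
    hL4 (hmoment 2) (hmoment 4) (C i) (m i - zbar i)
  simp only [Fintype.card_fin] at hrow
  simp_rw [hpointwise]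
  rw [integral_finsetSum _ fun i _ =>
    integrable_sq_add_mul_one_add_sum_sq (X := fun i ω => u ω i) hL4 (C i) (m i - zbar i)]
  simp only [hrow, sum_add_distrib, ← mul_sum, EuclideanSpace.real_norm_sq_eq, PiLp.sub_apply]

/-- if the components of `u` are i.i.d. with zero first and third moments
and finite fourth moments, then for `T_w(u) = C u + m` and any fixed `z̄`,
`E[‖T_w(u) − z̄‖₂² (1 + ‖u‖₂²)]
  = (1 + d E[u₁²]) ‖m − z̄‖₂² + (E[u₁²] + (d−1)(E[u₁²])² + E[u₁⁴]) ‖C‖_F²`. -/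
theorem stmt_6 {Ω : Type*} [MeasurableSpace Ω] (μ : Measure Ω) [IsProbabilityMeasure μ]
    (d : ℕ) (hd : 0 < d) (u : Ω → EuclideanSpace ℝ (Fin d))
    (hmeas : ∀ i, Measurable fun ω => u ω i)
    (hindep : iIndepFun (fun i ω => u ω i) μ)
    (hident : ∀ i j : Fin d, IdentDistrib (fun ω => u ω i) (fun ω => u ω j) μ μ)
    (hmean : ∀ i, ∫ ω, u ω i ∂μ = 0)
    (hthird : ∀ i, ∫ ω, u ω i ^ 3 ∂μ = 0)
    (hL4 : ∀ i, MemLp (fun ω => u ω i) 4 μ)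
    (m zbar : EuclideanSpace ℝ (Fin d)) (C : Matrix (Fin d) (Fin d) ℝ) :
    ∫ ω, ‖Tmap (param m C) (u ω) - zbar‖ ^ 2 * (1 + ‖u ω‖ ^ 2) ∂μ
      = (1 + (d : ℝ) * ∫ ω, u ω ⟨0, hd⟩ ^ 2 ∂μ) * ‖m - zbar‖ ^ 2
        + ((∫ ω, u ω ⟨0, hd⟩ ^ 2 ∂μ) + ((d : ℝ) - 1) * (∫ ω, u ω ⟨0, hd⟩ ^ 2 ∂μ) ^ 2
            + ∫ ω, u ω ⟨0, hd⟩ ^ 4 ∂μ) * ∑ i, ∑ j, C i j ^ 2 :=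
  stmt_6_general μ d hd u hindep hident hmean hthird hL4 m zbar C
end
end

section
/- Let f : ℝ^d → ℝ be differentiable and M-smooth, and let z̄ ∈ ℝ^d be a stationary point of f. Let u ∼ s where s is standardized with fourth moment κ = E[u₁⁴] < ∞ (and κ ≥ 1), let T_w(u) = Cu + m, and let g = ∇_w f(T_w(u)) with respect to all d + d² parameters w = (m, C). Define w̄ = (z̄, 0_{d×d}), so that ‖w − w̄‖₂² = ‖m − z̄‖₂² + ‖C‖_F². Then E‖g‖₂² ≤ (d+κ) M² ‖w − w̄‖₂². -/
noncomputable section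

open MeasureTheory ProbabilityTheory
open scoped RealInnerProductSpace

/-! The chain rule gives `∇_w f(T_w u) = (∇f(y), ∇f(y) uᵀ)` with `y = T_w u`, so
`‖g‖² = (1 + ‖u‖²) ‖∇f(y)‖² ≤ M² (1 + ‖u‖²) ‖C u + m - z̄‖²` by smoothness at the stationary
point. Expanding the square, independence and the vanishing odd moments leave only
`E[1 + ‖u‖²] = d + 1` and `E[(1 + ‖u‖²) u_j u_l] = (d + κ) δ_jl`, so the bound integrates to
`M² ((d + κ) ‖C‖_F² + (d + 1) ‖m - z̄‖²)`, and `κ ≥ 1` finishes. -/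

section Reparameterization

variable {d : ℕ}

@[simp]
lemma Tmap_apply (w : EuclideanSpace ℝ (Fin d ⊕ Fin d × Fin d)) (u : EuclideanSpace ℝ (Fin d))
    (i : Fin d) : Tmap w u i = ∑ j, w (Sum.inr (i, j)) * u j + w (Sum.inl i) := rfl

@[simp]
lemma param_inl (m : EuclideanSpace ℝ (Fin d)) (C : Matrix (Fin d) (Fin d) ℝ) (i : Fin d) :
    param m C (Sum.inl i) = m i := rfl

@[simp]
lemma param_inr (m : EuclideanSpace ℝ (Fin d)) (C : Matrix (Fin d) (Fin d) ℝ) (p : Fin d × Fin d) :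
    param m C (Sum.inr p) = C p.1 p.2 := rfl

lemma param_sub (m m' : EuclideanSpace ℝ (Fin d)) (C C' : Matrix (Fin d) (Fin d) ℝ) :
    param m C - param m' C' = param (m - m') (C - C') := by
  ext (i | p) <;> rfl

lemma norm_sq_param (m : EuclideanSpace ℝ (Fin d)) (C : Matrix (Fin d) (Fin d) ℝ) :
    ‖param m C‖ ^ 2 = ‖m‖ ^ 2 + ∑ i, ∑ j, C i j ^ 2 := by
  simp [EuclideanSpace.real_norm_sq_eq, Fintype.sum_sum_type, Fintype.sum_prod_type]

lemma inner_param (m : EuclideanSpace ℝ (Fin d)) (C : Matrix (Fin d) (Fin d) ℝ)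
    (w : EuclideanSpace ℝ (Fin d ⊕ Fin d × Fin d)) :
    ⟪param m C, w⟫ = ∑ i, (m i * w (Sum.inl i) + ∑ j, C i j * w (Sum.inr (i, j))) := by
  simp [PiLp.inner_apply, Fintype.sum_sum_type, Fintype.sum_prod_type, Finset.sum_add_distrib,
    mul_comm]

def tmapCLM (u : EuclideanSpace ℝ (Fin d)) :
    EuclideanSpace ℝ (Fin d ⊕ Fin d × Fin d) →L[ℝ] EuclideanSpace ℝ (Fin d) :=
  LinearMap.toContinuousLinearMap
    { toFun := fun w => Tmap w u
      map_add' := fun w w' => by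
        ext i
        simp only [Tmap_apply, PiLp.add_apply, add_mul, Finset.sum_add_distrib]
        ring
      map_smul' := fun c w => by
        ext i
        simp only [Tmap_apply, PiLp.smul_apply, smul_eq_mul, RingHom.id_apply, mul_add,
          Finset.mul_sum, mul_assoc] }

lemma hasGradientAt_comp_Tmap {f : EuclideanSpace ℝ (Fin d) → ℝ}
    (w : EuclideanSpace ℝ (Fin d ⊕ Fin d × Fin d)) (u : EuclideanSpace ℝ (Fin d))
    (hf : DifferentiableAt ℝ f (Tmap w u)) :
    HasGradientAt (fun w' => f (Tmap w' u))
      (param (gradient f (Tmap w u)) (Matrix.vecMulVec ⇑(gradient f (Tmap w u)) ⇑u)) w := by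
  have h := hf.hasGradientAt.hasFDerivAt.comp w (tmapCLM u).hasFDerivAt
  rw [hasGradientAt_iff_hasFDerivAt]
  refine h.congr_fderiv ?_
  ext1 w'
  simp only [ContinuousLinearMap.comp_apply, InnerProductSpace.toDual_apply_apply]
  rw [inner_param]
  change ⟪gradient f (Tmap w u), Tmap w' u⟫ = _
  simp only [PiLp.inner_apply, RCLike.inner_apply, conj_trivial, Tmap_apply,
    Matrix.vecMulVec_apply]
  refine Finset.sum_congr rfl fun i _ => ?_
  rw [add_mul, Finset.sum_mul, add_comm]
  congr 1
  · ring
  · exact Finset.sum_congr rfl fun j _ => by ring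

lemma norm_sq_gradient_comp_Tmap {f : EuclideanSpace ℝ (Fin d) → ℝ}
    (w : EuclideanSpace ℝ (Fin d ⊕ Fin d × Fin d)) (u : EuclideanSpace ℝ (Fin d))
    (hf : DifferentiableAt ℝ f (Tmap w u)) :
    ‖gradient (fun w' => f (Tmap w' u)) w‖ ^ 2 = (1 + ‖u‖ ^ 2) * ‖gradient f (Tmap w u)‖ ^ 2 := by
  rw [(hasGradientAt_comp_Tmap w u hf).gradient, norm_sq_param]
  simp only [Matrix.vecMulVec_apply, mul_pow, ← Finset.mul_sum, ← Finset.sum_mul,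
    EuclideanSpace.real_norm_sq_eq]
  ring

lemma norm_sq_Tmap_param_sub (m z u : EuclideanSpace ℝ (Fin d)) (C : Matrix (Fin d) (Fin d) ℝ) :
    ‖Tmap (param m C) u - z‖ ^ 2 = ∑ i, (∑ j, C i j * u j + (m - z) i) ^ 2 := by
  simp only [EuclideanSpace.real_norm_sq_eq, PiLp.sub_apply, Tmap_apply, param_inl, param_inr,
    add_sub_assoc]

lemma norm_sq_gradient_comp_Tmap_le {f : EuclideanSpace ℝ (Fin d) → ℝ} {M : ℝ}
    {z : EuclideanSpace ℝ (Fin d)} (w : EuclideanSpace ℝ (Fin d ⊕ Fin d × Fin d))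
    (u : EuclideanSpace ℝ (Fin d)) (hf : DifferentiableAt ℝ f (Tmap w u))
    (hsmooth : ‖gradient f (Tmap w u) - gradient f z‖ ≤ M * ‖Tmap w u - z‖)
    (hz : gradient f z = 0) :
    ‖gradient (fun w' => f (Tmap w' u)) w‖ ^ 2 ≤ M ^ 2 * ((1 + ‖u‖ ^ 2) * ‖Tmap w u - z‖ ^ 2) := by
  rw [hz, sub_zero] at hsmooth
  rw [norm_sq_gradient_comp_Tmap w u hf]
  calc (1 + ‖u‖ ^ 2) * ‖gradient f (Tmap w u)‖ ^ 2 ≤ (1 + ‖u‖ ^ 2) * (M * ‖Tmap w u - z‖) ^ 2 := by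
        gcongr
    _ = M ^ 2 * ((1 + ‖u‖ ^ 2) * ‖Tmap w u - z‖ ^ 2) := by ring

end Reparameterization

instance ENNReal.holderTriple_four_four_two : ENNReal.HolderTriple 4 4 2 := ⟨by
  rw [show (4 : ENNReal) = 2 * 2 by norm_num, ENNReal.mul_inv (by simp) (by simp),
    ← two_mul, ← mul_assoc, ENNReal.mul_inv_cancel (by simp) (by simp), one_mul]⟩

lemma integral_mul_sq_sum_add {Ω ι : Type*} [MeasurableSpace Ω] {μ : Measure Ω} [Fintype ι]
    [DecidableEq ι] {W : Ω → ℝ} {Y : ι → Ω → ℝ} {a : ℝ} (hW : Integrable W μ)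
    (hWY : ∀ j, Integrable (fun ω => W ω * Y j ω) μ)
    (hWYY : ∀ j l, Integrable (fun ω => W ω * (Y j ω * Y l ω)) μ)
    (hmean : ∀ j, ∫ ω, W ω * Y j ω ∂μ = 0)
    (hcov : ∀ j l, ∫ ω, W ω * (Y j ω * Y l ω) ∂μ = if j = l then a else 0)
    (c : ι → ℝ) (e : ℝ) :
    ∫ ω, W ω * (∑ j, c j * Y j ω + e) ^ 2 ∂μ = a * ∑ j, c j ^ 2 + e ^ 2 * ∫ ω, W ω ∂μ := by
  have hexpand : ∀ ω, W ω * (∑ j, c j * Y j ω + e) ^ 2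
      = ∑ j, ∑ l, c j * c l * (W ω * (Y j ω * Y l ω))
        + (∑ j, 2 * e * c j * (W ω * Y j ω) + e ^ 2 * W ω) := by
    intro ω
    have hquad : ∑ j, ∑ l, c j * c l * (W ω * (Y j ω * Y l ω))
        = W ω * (∑ j, c j * Y j ω) ^ 2 := by
      rw [sq, Finset.sum_mul_sum, Finset.mul_sum]
      refine Fintype.sum_congr _ _ fun j => ?_
      rw [Finset.mul_sum]
      exact Fintype.sum_congr _ _ fun l => by ring
    have hlin : ∑ j, 2 * e * c j * (W ω * Y j ω) = 2 * e * W ω * ∑ j, c j * Y j ω := by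
      rw [Finset.mul_sum]
      exact Fintype.sum_congr _ _ fun j => by ring
    rw [hquad, hlin]
    ring
  have hquad : Integrable (fun ω => ∑ j, ∑ l, c j * c l * (W ω * (Y j ω * Y l ω))) μ :=
    integrable_finsetSum _ fun j _ => integrable_finsetSum _ fun l _ => (hWYY j l).const_mul _
  have hlin : Integrable (fun ω => ∑ j, 2 * e * c j * (W ω * Y j ω)) μ :=
    integrable_finsetSum _ fun j _ => (hWY j).const_mul _
  have hrest : Integrable (fun ω => ∑ j, 2 * e * c j * (W ω * Y j ω) + e ^ 2 * W ω) μ :=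
    hlin.add (hW.const_mul _)
  rw [integral_congr_ae (.of_forall hexpand), integral_add hquad hrest,
    integral_add hlin (hW.const_mul _), integral_const_mul,
    integral_finsetSum _ fun j _ => integrable_finsetSum _ fun l _ => (hWYY j l).const_mul _,
    integral_finsetSum _ fun j _ => (hWY j).const_mul _]
  simp only [integral_finsetSum _ fun l _ => (hWYY _ l).const_mul _, integral_const_mul, hmean,
    hcov, mul_ite, mul_zero, Finset.sum_ite_eq, Finset.mem_univ, if_true,
    Finset.sum_const_zero, zero_add, Finset.mul_sum]
  congr 1
  exact Fintype.sum_congr _ _ fun j => by ring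

lemma integral_one_add_sum_mul {Ω ι : Type*} [MeasurableSpace Ω] {μ : Measure Ω} [Fintype ι]
    {Z : ι → Ω → ℝ} {V : Ω → ℝ} (hV : Integrable V μ)
    (hZV : ∀ k, Integrable (fun ω => Z k ω * V ω) μ) :
    ∫ ω, (1 + ∑ k, Z k ω) * V ω ∂μ = ∫ ω, V ω ∂μ + ∑ k, ∫ ω, Z k ω * V ω ∂μ := by
  simp only [add_mul, one_mul, Finset.sum_mul]
  rw [integral_add hV (integrable_finsetSum _ fun k _ => hZV k),
    integral_finsetSum _ fun k _ => hZV k]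

structure IsStandardized {Ω ι : Type*} [MeasurableSpace Ω] (μ : Measure Ω) (X : ι → Ω → ℝ)
    (κ : ℝ) : Prop where
  iIndepFun : iIndepFun X μ
  memLp_four : ∀ i, MemLp (X i) 4 μ
  integral_eq_zero : ∀ i, ∫ ω, X i ω ∂μ = 0
  integral_sq : ∀ i, ∫ ω, X i ω ^ 2 ∂μ = 1
  integral_pow_three : ∀ i, ∫ ω, X i ω ^ 3 ∂μ = 0
  integral_pow_four : ∀ i, ∫ ω, X i ω ^ 4 ∂μ = κ

namespace IsStandardized

variable {Ω ι : Type*} [MeasurableSpace Ω] {μ : Measure Ω} {X : ι → Ω → ℝ} {κ : ℝ}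

lemma aestronglyMeasurable (hX : IsStandardized μ X κ) (i : ι) :
    AEStronglyMeasurable (X i) μ :=
  (hX.memLp_four i).aestronglyMeasurable

lemma memLp_two_mul (hX : IsStandardized μ X κ) (i j : ι) :
    MemLp (fun ω => X i ω * X j ω) 2 μ :=
  (hX.memLp_four j).mul' (hX.memLp_four i)

lemma memLp_two_sq (hX : IsStandardized μ X κ) (i : ι) : MemLp (fun ω => X i ω ^ 2) 2 μ := by
  simpa only [sq] using hX.memLp_two_mul i i

lemma integral_mul_eq_ite [DecidableEq ι] (hX : IsStandardized μ X κ) (j l : ι) :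
    ∫ ω, X j ω * X l ω ∂μ = if j = l then 1 else 0 := by
  split_ifs with hjl
  · subst hjl
    simpa only [sq] using hX.integral_sq j
  · rw [(hX.iIndepFun.indepFun hjl).integral_fun_mul_eq_mul_integral
      (hX.aestronglyMeasurable j) (hX.aestronglyMeasurable l), hX.integral_eq_zero, zero_mul]

lemma integral_sq_mul_eq_zero (hX : IsStandardized μ X κ) (k j : ι) :
    ∫ ω, X k ω ^ 2 * X j ω ∂μ = 0 := by
  by_cases hkj : k = j
  · subst hkj
    simpa only [← pow_succ] using hX.integral_pow_three k
  · have hprod : ∫ ω, X k ω ^ 2 * X j ω ∂μ = (∫ ω, X k ω ^ 2 ∂μ) * ∫ ω, X j ω ∂μ :=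
      ((hX.iIndepFun.indepFun hkj).comp (measurable_id.pow_const 2)
        measurable_id).integral_fun_mul_eq_mul_integral
        ((hX.aestronglyMeasurable k).pow 2) (hX.aestronglyMeasurable j)
    rw [hprod, hX.integral_eq_zero, mul_zero]

lemma integral_sq_mul_mul_eq_zero (hX : IsStandardized μ X κ) {k j l : ι} (hkl : k ≠ l)
    (hjl : j ≠ l) : ∫ ω, X k ω ^ 2 * (X j ω * X l ω) ∂μ = 0 := by
  have hindep := (hX.iIndepFun.indepFun_prodMk₀
    (fun i => (hX.aestronglyMeasurable i).aemeasurable) k j l hkl hjl).comp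
    ((measurable_fst.pow_const 2).mul measurable_snd) measurable_id
  have hprod : ∫ ω, X k ω ^ 2 * X j ω * X l ω ∂μ
      = (∫ ω, X k ω ^ 2 * X j ω ∂μ) * ∫ ω, X l ω ∂μ :=
    hindep.integral_fun_mul_eq_mul_integral
      (((hX.aestronglyMeasurable k).pow 2).mul (hX.aestronglyMeasurable j))
      (hX.aestronglyMeasurable l)
  simp only [← mul_assoc]
  rw [hprod, hX.integral_eq_zero, mul_zero]

lemma integral_sq_mul_mul_eq_ite [DecidableEq ι] (hX : IsStandardized μ X κ) (k j l : ι) :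
    ∫ ω, X k ω ^ 2 * (X j ω * X l ω) ∂μ = if j = l then (if j = k then κ else 1) else 0 := by
  by_cases hjl : j = l
  · subst hjl
    by_cases hjk : j = k
    · subst hjk
      rw [if_pos rfl, if_pos rfl, ← hX.integral_pow_four j]
      congr 1 with ω
      ring
    · have hprod : ∫ ω, X k ω ^ 2 * X j ω ^ 2 ∂μ = (∫ ω, X k ω ^ 2 ∂μ) * ∫ ω, X j ω ^ 2 ∂μ :=
        ((hX.iIndepFun.indepFun (Ne.symm hjk)).comp (measurable_id.pow_const 2)
          (measurable_id.pow_const 2)).integral_fun_mul_eq_mul_integral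
          ((hX.aestronglyMeasurable k).pow 2) ((hX.aestronglyMeasurable j).pow 2)
      simp only [if_true, hjk, if_false, ← sq]
      rw [hprod, hX.integral_sq, hX.integral_sq, mul_one]
  · rw [if_neg hjl]
    by_cases hkl : k = l
    · subst hkl
      simp only [mul_comm (X j _)]
      exact hX.integral_sq_mul_mul_eq_zero (Ne.symm hjl) (Ne.symm hjl)
    · exact hX.integral_sq_mul_mul_eq_zero hkl hjl

variable [IsProbabilityMeasure μ]

lemma memLp_two (hX : IsStandardized μ X κ) (i : ι) : MemLp (X i) 2 μ :=
  (hX.memLp_four i).mono_exponent (by norm_num)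

lemma integrable (hX : IsStandardized μ X κ) (i : ι) : Integrable (X i) μ :=
  (hX.memLp_four i).integrable (by norm_num)

lemma integrable_mul (hX : IsStandardized μ X κ) (i j : ι) :
    Integrable (fun ω => X i ω * X j ω) μ :=
  (hX.memLp_two i).integrable_mul (hX.memLp_two j)

variable [Fintype ι]

lemma memLp_two_weight (hX : IsStandardized μ X κ) :
    MemLp (fun ω => 1 + ∑ k, X k ω ^ 2) 2 μ :=
  (memLp_const (1 : ℝ)).add (memLp_finsetSum _ fun k _ => hX.memLp_two_sq k)

lemma integral_weight (hX : IsStandardized μ X κ) :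
    ∫ ω, 1 + ∑ k, X k ω ^ 2 ∂μ = Fintype.card ι + 1 := by
  have h := integral_one_add_sum_mul (μ := μ) (Z := fun k ω => X k ω ^ 2) (integrable_const 1)
    fun k => by simpa only [mul_one] using (hX.memLp_two_sq k).integrable (by norm_num)
  simp only [mul_one, integral_const, probReal_univ, smul_eq_mul, hX.integral_sq,
    Finset.sum_const, Finset.card_univ, nsmul_eq_mul] at h
  rw [h]
  ring

lemma integral_weight_mul (hX : IsStandardized μ X κ) (j : ι) :
    ∫ ω, (1 + ∑ k, X k ω ^ 2) * X j ω ∂μ = 0 := by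
  rw [integral_one_add_sum_mul (hX.integrable j)
    fun k => (hX.memLp_two_sq k).integrable_mul (hX.memLp_two j)]
  simp only [hX.integral_eq_zero, hX.integral_sq_mul_eq_zero, Finset.sum_const_zero, add_zero]

lemma integral_weight_mul_mul [DecidableEq ι] (hX : IsStandardized μ X κ) (j l : ι) :
    ∫ ω, (1 + ∑ k, X k ω ^ 2) * (X j ω * X l ω) ∂μ
      = if j = l then (Fintype.card ι : ℝ) + κ else 0 := by
  rw [integral_one_add_sum_mul (hX.integrable_mul j l)
    fun k => (hX.memLp_two_sq k).integrable_mul (hX.memLp_two_mul j l)]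
  simp only [hX.integral_mul_eq_ite, hX.integral_sq_mul_mul_eq_ite]
  split_ifs with hjl
  · have hsplit : ∀ k, (if j = k then κ else 1) = 1 + if j = k then κ - 1 else 0 := fun k => by
      split_ifs <;> ring
    simp only [hsplit, Finset.sum_add_distrib, Finset.sum_ite_eq, Finset.mem_univ, if_true,
      Finset.sum_const, Finset.card_univ, nsmul_eq_mul, mul_one]
    ring
  · simp

lemma integrable_weight_mul_sq (hX : IsStandardized μ X κ) (c : ι → ℝ) (e : ℝ) :
    Integrable (fun ω => (1 + ∑ k, X k ω ^ 2) * (∑ j, c j * X j ω + e) ^ 2) μ := by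
  have hlin : MemLp (fun ω => ∑ j, c j * X j ω + e) 4 μ :=
    (memLp_finsetSum _ fun j _ => (hX.memLp_four j).const_mul (c j)).add (memLp_const e)
  simpa only [sq, Pi.mul_def] using hX.memLp_two_weight.integrable_mul (hlin.mul' hlin (r := 2))

lemma integrable_weight_mul_sum_sq {ι' : Type*} [Fintype ι'] (hX : IsStandardized μ X κ)
    (C : Matrix ι' ι ℝ) (v : ι' → ℝ) :
    Integrable (fun ω => (1 + ∑ k, X k ω ^ 2) * ∑ i, (∑ j, C i j * X j ω + v i) ^ 2) μ := by
  simpa only [Finset.mul_sum] using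
    integrable_finsetSum _ fun i _ => hX.integrable_weight_mul_sq (C i) (v i)

lemma integral_weight_mul_sum_sq {ι' : Type*} [Fintype ι'] (hX : IsStandardized μ X κ)
    (C : Matrix ι' ι ℝ) (v : ι' → ℝ) :
    ∫ ω, (1 + ∑ k, X k ω ^ 2) * ∑ i, (∑ j, C i j * X j ω + v i) ^ 2 ∂μ
      = (Fintype.card ι + κ) * ∑ i, ∑ j, C i j ^ 2 + (Fintype.card ι + 1) * ∑ i, v i ^ 2 := by
  classical
  have hrow : ∀ i, ∫ ω, (1 + ∑ k, X k ω ^ 2) * (∑ j, C i j * X j ω + v i) ^ 2 ∂μ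
      = (Fintype.card ι + κ) * ∑ j, C i j ^ 2 + (Fintype.card ι + 1) * v i ^ 2 := fun i => by
    rw [integral_mul_sq_sum_add (hX.memLp_two_weight.integrable (by norm_num))
      (fun j => hX.memLp_two_weight.integrable_mul (hX.memLp_two j))
      (fun j l => hX.memLp_two_weight.integrable_mul (hX.memLp_two_mul j l))
      hX.integral_weight_mul hX.integral_weight_mul_mul, hX.integral_weight]
    ring
  rw [integral_congr_ae (.of_forall fun ω => Finset.mul_sum _ _ _),
    integral_finsetSum _ fun i _ => hX.integrable_weight_mul_sq (C i) (v i),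
    Fintype.sum_congr _ _ hrow, Finset.sum_add_distrib, Finset.mul_sum, Finset.mul_sum]

end IsStandardized

theorem stmt_8_general {Ω : Type*} [MeasurableSpace Ω] (μ : Measure Ω) [IsProbabilityMeasure μ]
    (d : ℕ) (hd : 0 < d) (u : Ω → EuclideanSpace ℝ (Fin d))
    (hindep : iIndepFun (fun i ω => u ω i) μ)
    (hident : ∀ i j : Fin d, IdentDistrib (fun ω => u ω i) (fun ω => u ω j) μ μ)
    (hmean : ∀ i, ∫ ω, u ω i ∂μ = 0)
    (hthird : ∀ i, ∫ ω, u ω i ^ 3 ∂μ = 0)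
    (hvar : ∀ i, ∫ ω, u ω i ^ 2 ∂μ = 1)
    (hL4 : ∀ i, MemLp (fun ω => u ω i) 4 μ)
    (κ : ℝ) (hκ : κ = ∫ ω, u ω ⟨0, hd⟩ ^ 4 ∂μ) (hκ1 : 1 ≤ κ)
    (f : EuclideanSpace ℝ (Fin d) → ℝ) (hf : Differentiable ℝ f)
    (M : ℝ)
    (hsmooth : ∀ y z : EuclideanSpace ℝ (Fin d),
      ‖gradient f y - gradient f z‖ ≤ M * ‖y - z‖)
    (zbar : EuclideanSpace ℝ (Fin d)) (hstat : gradient f zbar = 0)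
    (m : EuclideanSpace ℝ (Fin d)) (C : Matrix (Fin d) (Fin d) ℝ) :
    ‖param m C - param zbar 0‖ ^ 2 = ‖m - zbar‖ ^ 2 + ∑ i, ∑ j, C i j ^ 2 ∧
    ∫ ω, ‖gradient (fun w' => f (Tmap w' (u ω))) (param m C)‖ ^ 2 ∂μ
      ≤ ((d : ℝ) + κ) * M ^ 2 * ‖param m C - param zbar 0‖ ^ 2 := by
  have hX : IsStandardized μ (fun i ω => u ω i) κ :=
    { iIndepFun := hindep
      memLp_four := hL4
      integral_eq_zero := hmean
      integral_sq := hvar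
      integral_pow_three := hthird
      integral_pow_four := fun i => by
        rw [hκ]
        exact ((hident i ⟨0, hd⟩).comp (measurable_id.pow_const 4)).integral_eq }
  have hnorm : ‖param m C - param zbar 0‖ ^ 2 = ‖m - zbar‖ ^ 2 + ∑ i, ∑ j, C i j ^ 2 := by
    rw [param_sub, sub_zero, norm_sq_param]
  refine ⟨hnorm, ?_⟩
  have hbound : ∀ ω, ‖gradient (fun w' => f (Tmap w' (u ω))) (param m C)‖ ^ 2 ≤
      M ^ 2 * ((1 + ∑ k, u ω k ^ 2) * ∑ i, (∑ j, C i j * u ω j + (m - zbar) i) ^ 2) := fun ω => by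
    have h := norm_sq_gradient_comp_Tmap_le (param m C) (u ω) (hf _) (hsmooth _ zbar) hstat
    rwa [norm_sq_Tmap_param_sub, EuclideanSpace.real_norm_sq_eq (u ω)] at h
  calc ∫ ω, ‖gradient (fun w' => f (Tmap w' (u ω))) (param m C)‖ ^ 2 ∂μ
      ≤ ∫ ω, M ^ 2 * ((1 + ∑ k, u ω k ^ 2) * ∑ i, (∑ j, C i j * u ω j + (m - zbar) i) ^ 2) ∂μ :=
        integral_mono_of_nonneg (.of_forall fun ω => by positivity)
          ((hX.integrable_weight_mul_sum_sq C _).const_mul _) (.of_forall hbound)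
    _ = M ^ 2 * ((d + κ) * ∑ i, ∑ j, C i j ^ 2 + (d + 1) * ‖m - zbar‖ ^ 2) := by
        rw [integral_const_mul, hX.integral_weight_mul_sum_sq, Fintype.card_fin,
          EuclideanSpace.real_norm_sq_eq]
    _ ≤ M ^ 2 * ((d + κ) * ∑ i, ∑ j, C i j ^ 2 + (d + κ) * ‖m - zbar‖ ^ 2) := by gcongr
    _ = ((d : ℝ) + κ) * M ^ 2 * ‖param m C - param zbar 0‖ ^ 2 := by rw [hnorm]; ring

/-- with `w̄ = (z̄, 0_{d×d})` one has
`‖w − w̄‖₂² = ‖m − z̄‖₂² + ‖C‖_F²`, and if `f` is `M`-smooth with stationary point `z̄`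
and `u` is standardized with fourth moment `κ ≥ 1`, then
`E‖g‖₂² ≤ (d+κ) M² ‖w − w̄‖₂²` for `g = ∇_w f(T_w(u))`. -/
theorem stmt_8 {Ω : Type*} [MeasurableSpace Ω] (μ : Measure Ω) [IsProbabilityMeasure μ]
    (d : ℕ) (hd : 0 < d) (u : Ω → EuclideanSpace ℝ (Fin d))
    (hmeas : ∀ i, Measurable fun ω => u ω i)
    (hindep : iIndepFun (fun i ω => u ω i) μ)
    (hident : ∀ i j : Fin d, IdentDistrib (fun ω => u ω i) (fun ω => u ω j) μ μ)
    (hmean : ∀ i, ∫ ω, u ω i ∂μ = 0)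
    (hthird : ∀ i, ∫ ω, u ω i ^ 3 ∂μ = 0)
    (hvar : ∀ i, ∫ ω, u ω i ^ 2 ∂μ = 1)
    (hL4 : ∀ i, MemLp (fun ω => u ω i) 4 μ)
    (κ : ℝ) (hκ : κ = ∫ ω, u ω ⟨0, hd⟩ ^ 4 ∂μ) (hκ1 : 1 ≤ κ)
    (f : EuclideanSpace ℝ (Fin d) → ℝ) (hf : Differentiable ℝ f)
    (M : ℝ) (hM : 0 ≤ M)
    (hsmooth : ∀ y z : EuclideanSpace ℝ (Fin d),
      ‖gradient f y - gradient f z‖ ≤ M * ‖y - z‖)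
    (zbar : EuclideanSpace ℝ (Fin d)) (hstat : gradient f zbar = 0)
    (m : EuclideanSpace ℝ (Fin d)) (C : Matrix (Fin d) (Fin d) ℝ) :
    ‖param m C - param zbar 0‖ ^ 2 = ‖m - zbar‖ ^ 2 + ∑ i, ∑ j, C i j ^ 2 ∧
    ∫ ω, ‖gradient (fun w' => f (Tmap w' (u ω))) (param m C)‖ ^ 2 ∂μ
      ≤ ((d : ℝ) + κ) * M ^ 2 * ‖param m C - param zbar 0‖ ^ 2 :=
  stmt_8_general μ d hd u hindep hident hmean hthird hvar hL4 κ hκ hκ1 f hf M hsmooth zbar hstat m C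
end
end
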